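/- Let ν be a finitely supported multi-index, (b_j) nonnegative reals, C₅, C₆ ≥ 0. Suppose p_m ≤ C₅(|m|+1)! b^m for all m ≤ ν and r_m ≤ C₆ b^m for all m ≤ ν. Then ∑_{m ≤ ν} (ν choose m) p_m r_{ν−m} ≤ C₅C₆ (|ν|+2)! b^ν. -/

import Mathlib

/-!
Bounding each term reduces the sum to `C₅ C₆ b^ν ∑_{m ≤ ν} (ν choose m) (|m| + 1)!`. Grouping the
`m` by `|m| = ℓ`, the multivariate Vandermonde identity turns this into
`∑_{ℓ ≤ n} (n choose ℓ) (ℓ + 1)!` with `n = |ν|`, and each of these `n + 1` terms is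
`(ℓ + 1) · n! / (n - ℓ)! ≤ (n + 1) · n!`.
-/

open Finset Polynomial Nat

section Vandermonde

variable {ι : Type*} [Fintype ι] [DecidableEq ι]

lemma Pi.Iic_eq_piFinset_range (ν : ι → ℕ) :
    Iic ν = Fintype.piFinset fun j => range (ν j + 1) := by
  ext m
  simp [Fintype.mem_piFinset, Pi.le_def]

/-- Multivariate Vandermonde identity: compare coefficients in
`∏ j, (X + 1) ^ ν j = (X + 1) ^ |ν|`. -/
theorem sum_prod_choose_of_sum_eq (ν : ι → ℕ) (ℓ : ℕ) :
    ∑ m ∈ Iic ν with ∑ j, m j = ℓ, ∏ j, (ν j).choose (m j) = (∑ j, ν j).choose ℓ := by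
  have expand : (X + 1 : ℕ[X]) ^ (∑ j, ν j)
      = ∑ m ∈ Iic ν, C (∏ j, (ν j).choose (m j)) * X ^ (∑ j, m j) := by
    rw [← prod_pow_eq_pow_sum]
    simp_rw [add_pow, one_pow, mul_one]
    rw [Pi.Iic_eq_piFinset_range, prod_univ_sum]
    refine sum_congr rfl fun m _ => ?_
    rw [prod_mul_distrib, prod_pow_eq_pow_sum, mul_comm, map_prod]
    exact congrArg (· * _) (prod_congr rfl fun j _ => (C_eq_natCast (R := ℕ) _).symm)
  have := congrArg (coeff · ℓ) expand
  simp only [coeff_X_add_one_pow, Nat.cast_id, finsetSum_coeff, coeff_C_mul_X_pow,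
    @eq_comm _ ℓ] at this
  rw [this, sum_filter]

theorem sum_Iic_prod_choose_mul {R : Type*} [CommSemiring R] (ν : ι → ℕ) (g : ℕ → R) :
    ∑ m ∈ Iic ν, (∏ j, ((ν j).choose (m j) : R)) * g (∑ j, m j)
      = ∑ ℓ ∈ range (∑ j, ν j + 1), ((∑ j, ν j).choose ℓ : R) * g ℓ := by
  have maps_to : ∀ m ∈ Iic ν, ∑ j, m j ∈ range (∑ j, ν j + 1) := fun m hm =>
    mem_range_succ_iff.2 (sum_le_sum fun j _ => mem_Iic.1 hm j)
  rw [← sum_fiberwise_of_maps_to maps_to]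
  refine sum_congr rfl fun ℓ _ => ?_
  rw [← sum_prod_choose_of_sum_eq ν ℓ]
  push_cast
  rw [sum_mul]
  exact sum_congr rfl fun m hm => by rw [(mem_filter.1 hm).2]

end Vandermonde

theorem Nat.sum_range_choose_mul_factorial_succ_le (n : ℕ) :
    ∑ ℓ ∈ range (n + 1), n.choose ℓ * (ℓ + 1)! ≤ (n + 2)! := by
  have term_le : ∀ ℓ ∈ range (n + 1), n.choose ℓ * (ℓ + 1)! ≤ (n + 1) * n ! := by
    intro ℓ hℓ
    have hℓn : ℓ ≤ n := mem_range_succ_iff.1 hℓ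
    have desc_le : ℓ ! * n.choose ℓ ≤ n ! := by
      rw [← descFactorial_eq_factorial_mul_choose, ← factorial_mul_descFactorial hℓn]
      exact Nat.le_mul_of_pos_left _ (factorial_pos _)
    calc n.choose ℓ * (ℓ + 1)! = (ℓ + 1) * (ℓ ! * n.choose ℓ) := by rw [factorial_succ]; ring
      _ ≤ (n + 1) * n ! := Nat.mul_le_mul (by omega) desc_le
  calc ∑ ℓ ∈ range (n + 1), n.choose ℓ * (ℓ + 1)!
      ≤ ∑ _ℓ ∈ range (n + 1), (n + 1) * n ! := sum_le_sum term_le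
    _ = (n + 1) * (n + 1)! := by rw [sum_const, card_range, smul_eq_mul, factorial_succ]
    _ ≤ (n + 2) * (n + 1)! := Nat.mul_le_mul_right _ (by omega)
    _ = (n + 2)! := (factorial_succ _).symm

theorem prod_pow_mul_prod_pow_sub {ι M : Type*} [Fintype ι] [CommMonoid M] (b : ι → M)
    {m ν : ι → ℕ} (hm : m ≤ ν) :
    (∏ j, b j ^ m j) * ∏ j, b j ^ (ν - m) j = ∏ j, b j ^ ν j := by
  rw [← prod_mul_distrib]
  exact prod_congr rfl fun j _ => by rw [← pow_add, Pi.sub_apply, Nat.add_sub_cancel' (hm j)]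

theorem stmt19_general (s : ℕ) (ν : Fin s → ℕ) (b : Fin s → ℝ) (hb : ∀ j, 0 ≤ b j)
    (C5 C6 : ℝ) (hC5 : 0 ≤ C5) (hC6 : 0 ≤ C6)
    (p r : (Fin s → ℕ) → ℝ)
    (hr0 : ∀ m, m ≤ ν → 0 ≤ r m)
    (hp : ∀ m, m ≤ ν →
      p m ≤ C5 * (Nat.factorial ((∑ j, m j) + 1) : ℝ) * ∏ j, b j ^ m j)
    (hr : ∀ m, m ≤ ν → r m ≤ C6 * ∏ j, b j ^ m j) :
    ∑ m ∈ Finset.Iic ν, (∏ j, ((ν j).choose (m j) : ℝ)) * p m * r (ν - m)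
      ≤ C5 * C6 * (Nat.factorial ((∑ j, ν j) + 2) : ℝ) * ∏ j, b j ^ ν j := by
  have hb_pow : ∀ m : Fin s → ℕ, 0 ≤ ∏ j, b j ^ m j := fun m =>
    prod_nonneg fun j _ => pow_nonneg (hb j) _
  have term_le : ∀ m ∈ Iic ν, (∏ j, ((ν j).choose (m j) : ℝ)) * p m * r (ν - m)
      ≤ C5 * C6 * (∏ j, b j ^ ν j) * ((∏ j, ((ν j).choose (m j) : ℝ)) * ((∑ j, m j) + 1)!) := by
    intro m hm
    rw [mem_Iic] at hm
    have hνm : ν - m ≤ ν := tsub_le_self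
    calc (∏ j, ((ν j).choose (m j) : ℝ)) * p m * r (ν - m)
        ≤ (∏ j, ((ν j).choose (m j) : ℝ)) *
            ((C5 * ((∑ j, m j) + 1)! * ∏ j, b j ^ m j) * (C6 * ∏ j, b j ^ (ν - m) j)) := by
          rw [mul_assoc]
          gcongr
          exacts [hr0 _ hνm, mul_nonneg (by positivity) (hb_pow m), hp m hm, hr _ hνm]
      _ = _ := by rw [← prod_pow_mul_prod_pow_sub b hm]; ring
  calc _ ≤ ∑ m ∈ Iic ν,
        C5 * C6 * (∏ j, b j ^ ν j) * ((∏ j, ((ν j).choose (m j) : ℝ)) * ((∑ j, m j) + 1)!) :=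
        sum_le_sum term_le
    _ = C5 * C6 * (∏ j, b j ^ ν j) *
          ∑ ℓ ∈ range (∑ j, ν j + 1), ((∑ j, ν j).choose ℓ : ℝ) * ((ℓ + 1)! : ℝ) := by
        rw [← mul_sum, sum_Iic_prod_choose_mul ν fun ℓ => ((ℓ + 1)! : ℝ)]
    _ ≤ C5 * C6 * (∏ j, b j ^ ν j) * ((∑ j, ν j + 2)! : ℝ) := by
        gcongr
        · exact mul_nonneg (mul_nonneg hC5 hC6) (hb_pow ν)
        · exact_mod_cast Nat.sum_range_choose_mul_factorial_succ_le _
    _ = _ := by ring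

/-- Leibniz-type convolution estimate: if `p_m ≤ C₅ (|m|+1)! b^m` and
`r_m ≤ C₆ b^m` for all `m ≤ ν`, then
`∑_{m ≤ ν} (ν choose m) p_m r_{ν−m} ≤ C₅ C₆ (|ν|+2)! b^ν`. -/
theorem stmt19 (s : ℕ) (ν : Fin s → ℕ) (b : Fin s → ℝ) (hb : ∀ j, 0 ≤ b j)
    (C5 C6 : ℝ) (hC5 : 0 ≤ C5) (hC6 : 0 ≤ C6)
    (p r : (Fin s → ℕ) → ℝ)
    (hp0 : ∀ m, m ≤ ν → 0 ≤ p m) (hr0 : ∀ m, m ≤ ν → 0 ≤ r m)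
    (hp : ∀ m, m ≤ ν →
      p m ≤ C5 * (Nat.factorial ((∑ j, m j) + 1) : ℝ) * ∏ j, b j ^ m j)
    (hr : ∀ m, m ≤ ν → r m ≤ C6 * ∏ j, b j ^ m j) :
    ∑ m ∈ Finset.Iic ν, (∏ j, ((ν j).choose (m j) : ℝ)) * p m * r (ν - m)
      ≤ C5 * C6 * (Nat.factorial ((∑ j, ν j) + 2) : ℝ) * ∏ j, b j ^ ν j :=
  stmt19_general s ν b hb C5 C6 hC5 hC6 p r hr0 hp hr
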